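/- The function f(r) = r·√(1−r²)·𝒦(r)·𝒦(√(1−r²)) is strictly increasing on the interval (0, 1/√2] and strictly decreasing on the interval [1/√2, 1). -/

import Mathlib

open Set Filter

open Real MeasureTheory intervalIntegral Metric

lemma base_pos {r : ℝ} (hr : r^2 < 1) (θ : ℝ) : 0 < 1 - r^2 * Real.sin θ^2 := by
  nlinarith [Real.sin_sq_le_one θ, sq_nonneg (r * Real.sin θ), sq_nonneg r]

lemma cont_integrand {r p : ℝ} (hr : r^2 < 1) :
    Continuous fun θ : ℝ => (1 - r^2 * Real.sin θ^2) ^ p := by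
  apply Continuous.rpow_const
  · continuity
  · intro θ; exact Or.inl (base_pos hr θ).ne'

lemma integrable_integrand {r p : ℝ} (hr : r^2 < 1) :
    IntervalIntegrable (fun θ : ℝ => (1 - r^2 * Real.sin θ^2) ^ p) MeasureTheory.volume 0 (Real.pi/2) :=
  (cont_integrand hr).intervalIntegrable _ _

lemma hasDerivAt_param (p : ℝ) (hp : p ≤ 1) {r : ℝ} (hr : r^2 < 1) :
    HasDerivAt (fun x : ℝ => ∫ θ in (0:ℝ)..(Real.pi/2), (1 - x^2 * Real.sin θ^2) ^ p)
      (∫ θ in (0:ℝ)..(Real.pi/2),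
        p * (1 - r^2 * Real.sin θ^2) ^ (p-1) * (-(2*r*Real.sin θ^2))) r := by
  have habs : |r| < 1 := by
    nlinarith [abs_nonneg r, sq_abs r]
  set ε : ℝ := (1 - |r|)/2 with hε
  have εpos : 0 < ε := by simp only [hε]; linarith
  set m : ℝ := (1 + |r|)/2 with hm
  have hm1 : m < 1 := by simp only [hm]; linarith
  have hm0 : 0 ≤ m := by positivity
  have hmsq : m^2 < 1 := by nlinarith
  have hball : ∀ x ∈ ball r ε, |x| < m := by
    intro x hx
    have : |x - r| < ε := by simpa [Real.dist_eq] using hx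
    have h2 := abs_sub_abs_le_abs_sub x r
    simp only [hε, hm] at *
    linarith
  have hxsq : ∀ x ∈ ball r ε, x^2 < 1 := by
    intro x hx
    have h := hball x hx
    nlinarith [abs_nonneg x, sq_abs x]
  have key := intervalIntegral.hasDerivAt_integral_of_dominated_loc_of_deriv_le
    (F := fun x θ => (1 - x^2 * Real.sin θ^2) ^ p)
    (F' := fun x θ => p * (1 - x^2 * Real.sin θ^2) ^ (p-1) * (-(2*x*Real.sin θ^2)))
    (bound := fun _ => |p| * (1 - m^2) ^ (p-1) * 2)
    (a := 0) (b := Real.pi/2) (μ := MeasureTheory.volume) (Metric.ball_mem_nhds r εpos)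
    ?_ (integrable_integrand hr) ?_ ?_ ?_ ?_
  · exact key.2
  · filter_upwards [Metric.ball_mem_nhds r εpos] with x hx
    exact (cont_integrand (hxsq x hx)).aestronglyMeasurable
  · apply Continuous.aestronglyMeasurable
    exact (Continuous.mul continuous_const (cont_integrand hr)).mul (by continuity)
  · apply MeasureTheory.ae_of_all
    intro t _ x hx
    have hx2 := hxsq x hx
    have hu : 0 < 1 - x^2 * Real.sin t^2 := base_pos hx2 t
    have hxm := hball x hx
    have hum : 1 - m^2 ≤ 1 - x^2 * Real.sin t^2 := by
      nlinarith [Real.sin_sq_le_one t, sq_abs x, abs_nonneg x, sq_nonneg (Real.sin t)]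
    have h1 : (1 - x^2 * Real.sin t^2)^(p-1) ≤ (1 - m^2)^(p-1) :=
      Real.rpow_le_rpow_of_nonpos (by nlinarith) hum (by linarith)
    have hA : (0:ℝ) ≤ (1 - x^2 * Real.sin t ^ 2) ^ (p - 1) := (Real.rpow_pos_of_pos hu _).le
    rw [Real.norm_eq_abs, abs_mul, abs_mul, abs_of_nonneg hA]
    have hB : |(-(2*x*Real.sin t^2))| ≤ 2 := by
      have hx1 : |x| ≤ 1 := le_of_lt (hxm.trans hm1)
      have hs1 : Real.sin t^2 ≤ 1 := Real.sin_sq_le_one t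
      rw [abs_neg, abs_mul, abs_mul, abs_of_nonneg (sq_nonneg (Real.sin t))]
      have h2 : |(2:ℝ)| = 2 := by norm_num
      rw [h2]
      nlinarith [abs_nonneg x, sq_nonneg (Real.sin t)]
    have hA' : (0:ℝ) ≤ |p| * (1 - m^2)^(p-1) :=
      mul_nonneg (abs_nonneg p) (Real.rpow_pos_of_pos (by nlinarith) _).le
    exact mul_le_mul (mul_le_mul le_rfl h1 hA (abs_nonneg p)) hB (abs_nonneg _) hA'
  · exact (continuous_const).intervalIntegrable _ _
  · apply MeasureTheory.ae_of_all
    intro t _ x hx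
    have hu := base_pos (hxsq x hx) t
    have h0 : HasDerivAt (fun x : ℝ => 1 - x^2*Real.sin t^2) (-(2*x*Real.sin t^2)) x := by
      have h := ((hasDerivAt_pow 2 x).mul_const (Real.sin t^2)).const_sub 1
      refine h.congr_deriv ?_
      push_cast; ring
    have h1 := (Real.hasDerivAt_rpow_const (x := 1 - x^2*Real.sin t^2) (p := p)
      (Or.inl hu.ne')).comp x h0
    exact h1

/-- Complete elliptic integral of the first kind. -/
noncomputable def ellK (r : ℝ) : ℝ :=
  ∫ θ in (0:ℝ)..(Real.pi / 2), (1 - r ^ 2 * Real.sin θ ^ 2) ^ (-(1/2) : ℝ)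

/-- The Grötzsch modulus μ(r) = (π/2)·𝒦'(r)/𝒦(r). -/
noncomputable def mu (r : ℝ) : ℝ :=
  Real.pi / 2 * ellK (Real.sqrt (1 - r ^ 2)) / ellK r

noncomputable def ellE (r : ℝ) : ℝ :=
  ∫ θ in (0:ℝ)..(Real.pi / 2), (1 - r ^ 2 * Real.sin θ ^ 2) ^ ((1:ℝ)/2)

lemma rpow_half {u : ℝ} (hu : 0 ≤ u) : u ^ ((1:ℝ)/2) = Real.sqrt u :=
  (Real.sqrt_eq_rpow u).symm

lemma rpow_neg_half {u : ℝ} (hu : 0 ≤ u) : u ^ (-(1/2) : ℝ) = (Real.sqrt u)⁻¹ := by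
  rw [Real.rpow_neg hu, Real.sqrt_eq_rpow]

lemma rpow_neg_three_half {u : ℝ} (hu : 0 ≤ u) : u ^ (-(3/2) : ℝ) = (Real.sqrt u ^ 3)⁻¹ := by
  rw [Real.rpow_neg hu]
  congr 1
  rw [show ((3:ℝ)/2) = (1/2) * ((3:ℕ):ℝ) by norm_num, Real.rpow_mul hu, Real.rpow_natCast,
    Real.sqrt_eq_rpow]

/-- FTC identity: `∫ u^{1/2} - (1-r²)·u^{-3/2} = 0`. -/
lemma ftc_identity {r : ℝ} (hr : r^2 < 1) :
    ∫ θ in (0:ℝ)..(Real.pi/2),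
      ((1 - r^2 * Real.sin θ^2) ^ ((1:ℝ)/2)
        - (1-r^2) * (1 - r^2 * Real.sin θ^2) ^ (-(3/2) : ℝ)) = 0 := by
  have hint : IntervalIntegrable
      (fun θ : ℝ => (1 - r^2 * Real.sin θ^2) ^ ((1:ℝ)/2)
        - (1-r^2) * (1 - r^2 * Real.sin θ^2) ^ (-(3/2) : ℝ)) MeasureTheory.volume 0 (Real.pi/2) := by
    apply IntervalIntegrable.sub (integrable_integrand hr)
    exact (continuous_const.mul (cont_integrand hr)).intervalIntegrable _ _
  have key := intervalIntegral.integral_eq_sub_of_hasDerivAt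
    (f := fun θ => r^2 * (Real.sin θ * Real.cos θ) * (Real.sqrt (1 - r^2 * Real.sin θ^2))⁻¹)
    (f' := fun θ => (1 - r^2 * Real.sin θ^2) ^ ((1:ℝ)/2)
        - (1-r^2) * (1 - r^2 * Real.sin θ^2) ^ (-(3/2) : ℝ))
    (a := 0) (b := Real.pi/2) ?_ hint
  · rw [key]
    simp [Real.cos_pi_div_two, Real.sin_zero]
  · intro θ _
    have hu : 0 < 1 - r^2 * Real.sin θ^2 := base_pos hr θ
    have hv : 0 < Real.sqrt (1 - r^2 * Real.sin θ^2) := Real.sqrt_pos.mpr hu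
    have hv2 : Real.sqrt (1 - r^2 * Real.sin θ^2) ^ 2 = 1 - r^2 * Real.sin θ^2 :=
      Real.sq_sqrt hu.le
    have hsin : HasDerivAt (fun θ => Real.sin θ * Real.cos θ)
        (Real.cos θ^2 - Real.sin θ^2) θ := by
      have h := (Real.hasDerivAt_sin θ).fun_mul (Real.hasDerivAt_cos θ)
      refine h.congr_deriv ?_; ring
    have hU : HasDerivAt (fun θ => 1 - r^2 * Real.sin θ^2)
        (-(r^2 * (2 * Real.sin θ * Real.cos θ))) θ := by
      have h := (((Real.hasDerivAt_sin θ).fun_pow 2).const_mul (r^2)).const_sub 1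
      refine h.congr_deriv ?_; push_cast; ring
    have hsq := (Real.hasDerivAt_sqrt hu.ne').comp θ hU
    have hinv := hsq.fun_inv hv.ne'
    have hf := (hsin.const_mul (r^2)).fun_mul hinv
    refine hf.congr_deriv ?_
    simp only [Function.comp_apply, rpow_half hu.le, rpow_neg_three_half hu.le]
    have hcos : Real.cos θ^2 = 1 - Real.sin θ^2 := Real.cos_sq' θ
    set v := Real.sqrt (1 - r^2 * Real.sin θ^2) with hvdef
    field_simp
    linear_combination (-1 + r^2 - r^2*Real.sin θ^2 - v^2) * hv2 + (r^4*Real.sin θ^2 + v^2*r^2) * hcos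

lemma ell_pos {r p : ℝ} (hr : r^2 < 1) :
    0 < ∫ θ in (0:ℝ)..(Real.pi/2), (1 - r^2 * Real.sin θ^2) ^ p := by
  apply intervalIntegral.intervalIntegral_pos_of_pos_on (integrable_integrand hr)
  · intro x _; exact Real.rpow_pos_of_pos (base_pos hr x) p
  · positivity

lemma ellK_pos {r : ℝ} (hr : r^2 < 1) : 0 < ellK r := ell_pos hr

lemma ellE_pos {r : ℝ} (hr : r^2 < 1) : 0 < ellE r := ell_pos hr

lemma hasDerivAt_ellE {r : ℝ} (hr0 : r ≠ 0) (hr : r^2 < 1) :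
    HasDerivAt ellE ((ellE r - ellK r)/r) r := by
  have h := hasDerivAt_param ((1:ℝ)/2) (by norm_num) hr
  have hieq : (∫ θ in (0:ℝ)..(Real.pi/2),
      ((1:ℝ)/2) * (1 - r^2*Real.sin θ^2) ^ ((1:ℝ)/2 - 1) * (-(2*r*Real.sin θ^2)))
      = (ellE r - ellK r)/r := by
    have hpt : ∀ θ : ℝ, ((1:ℝ)/2) * (1 - r^2*Real.sin θ^2) ^ ((1:ℝ)/2 - 1) * (-(2*r*Real.sin θ^2))
        = ((1 - r^2*Real.sin θ^2) ^ ((1:ℝ)/2) - (1 - r^2*Real.sin θ^2) ^ (-(1/2):ℝ))/r := by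
      intro θ
      have hu := base_pos hr θ
      have hv : 0 < Real.sqrt (1 - r^2 * Real.sin θ^2) := Real.sqrt_pos.mpr hu
      have hv2 : Real.sqrt (1 - r^2 * Real.sin θ^2) ^ 2 = 1 - r^2 * Real.sin θ^2 :=
        Real.sq_sqrt hu.le
      rw [show ((1:ℝ)/2 - 1) = (-(1/2):ℝ) by norm_num, rpow_half hu.le, rpow_neg_half hu.le]
      set v := Real.sqrt (1 - r^2 * Real.sin θ^2) with hvdef
      field_simp
      linear_combination (-1) * hv2
    rw [intervalIntegral.integral_congr (fun θ _ => hpt θ), intervalIntegral.integral_div,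
      intervalIntegral.integral_sub (integrable_integrand hr) (integrable_integrand hr)]
    rfl
  rw [← hieq]
  exact h

lemma hasDerivAt_ellK {r : ℝ} (hr0 : r ≠ 0) (hr : r^2 < 1) :
    HasDerivAt ellK ((ellE r - (1-r^2) * ellK r)/(r*(1-r^2))) r := by
  have h1 : (0:ℝ) < 1 - r^2 := by linarith
  have h := hasDerivAt_param (-(1/2) : ℝ) (by norm_num) hr
  have hJ : ellE r - (1-r^2) * (∫ θ in (0:ℝ)..(Real.pi/2), (1 - r^2*Real.sin θ^2) ^ (-(3/2):ℝ)) = 0 := by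
    have := ftc_identity hr
    rw [intervalIntegral.integral_sub (integrable_integrand hr)
      ((continuous_const.fun_mul (cont_integrand hr)).intervalIntegrable _ _)] at this
    rw [show (∫ θ in (0:ℝ)..(Real.pi/2), (1-r^2) * (1 - r^2*Real.sin θ^2) ^ (-(3/2):ℝ))
      = (1-r^2) * ∫ θ in (0:ℝ)..(Real.pi/2), (1 - r^2*Real.sin θ^2) ^ (-(3/2):ℝ) from
      intervalIntegral.integral_const_mul _ _] at this
    exact this
  have hieq : (∫ θ in (0:ℝ)..(Real.pi/2),
      (-(1/2):ℝ) * (1 - r^2*Real.sin θ^2) ^ ((-(1/2):ℝ) - 1) * (-(2*r*Real.sin θ^2)))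
      = ((∫ θ in (0:ℝ)..(Real.pi/2), (1 - r^2*Real.sin θ^2) ^ (-(3/2):ℝ)) - ellK r)/r := by
    have hpt : ∀ θ : ℝ, (-(1/2):ℝ) * (1 - r^2*Real.sin θ^2) ^ ((-(1/2):ℝ) - 1) * (-(2*r*Real.sin θ^2))
        = ((1 - r^2*Real.sin θ^2) ^ (-(3/2):ℝ) - (1 - r^2*Real.sin θ^2) ^ (-(1/2):ℝ))/r := by
      intro θ
      have hu := base_pos hr θ
      have hv : 0 < Real.sqrt (1 - r^2 * Real.sin θ^2) := Real.sqrt_pos.mpr hu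
      have hv2 : Real.sqrt (1 - r^2 * Real.sin θ^2) ^ 2 = 1 - r^2 * Real.sin θ^2 :=
        Real.sq_sqrt hu.le
      rw [show ((-(1/2):ℝ) - 1) = (-(3/2):ℝ) by norm_num, rpow_neg_three_half hu.le,
        rpow_neg_half hu.le]
      set v := Real.sqrt (1 - r^2 * Real.sin θ^2) with hvdef
      field_simp
      linear_combination hv2
    rw [intervalIntegral.integral_congr (fun θ _ => hpt θ), intervalIntegral.integral_div,
      intervalIntegral.integral_sub (integrable_integrand hr) (integrable_integrand hr)]
    rfl
  rw [hieq] at h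
  have heq : ((∫ θ in (0:ℝ)..(Real.pi/2), (1 - r^2*Real.sin θ^2) ^ (-(3/2):ℝ)) - ellK r)/r
      = (ellE r - (1-r^2) * ellK r)/(r*(1-r^2)) := by
    have hJ' : (∫ θ in (0:ℝ)..(Real.pi/2), (1 - r^2*Real.sin θ^2) ^ (-(3/2):ℝ))
        = ellE r / (1-r^2) := by
      rw [eq_div_iff h1.ne']
      linarith [hJ]
    rw [hJ']
    field_simp
  rw [heq] at h
  exact h

lemma hasDerivAt_EK {r : ℝ} (hr0 : 0 < r) (hr1 : r < 1) :
    HasDerivAt (fun r => ellE r / ellK r)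
      (((ellE r - ellK r)/r * ellK r - ellE r * ((ellE r - (1-r^2) * ellK r)/(r*(1-r^2))))
        / ellK r ^ 2) r := by
  have hsq : r^2 < 1 := by nlinarith
  exact (hasDerivAt_ellE hr0.ne' hsq).div (hasDerivAt_ellK hr0.ne' hsq) (ellK_pos hsq).ne'

lemma EK_deriv_neg {r : ℝ} (hr0 : 0 < r) (hr1 : r < 1) :
    ((ellE r - ellK r)/r * ellK r - ellE r * ((ellE r - (1-r^2) * ellK r)/(r*(1-r^2))))
        / ellK r ^ 2 < 0 := by
  have hsq : r^2 < 1 := by nlinarith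
  have h1 : (0:ℝ) < 1 - r^2 := by nlinarith
  have hK := ellK_pos hsq
  apply div_neg_of_neg_of_pos _ (by positivity)
  have key : (ellE r - ellK r)/r * ellK r - ellE r * ((ellE r - (1-r^2) * ellK r)/(r*(1-r^2)))
      = -(((ellE r - (1-r^2)*ellK r)^2 + r^2*(1-r^2)*ellK r^2)/(r*(1-r^2))) := by
    field_simp
    ring
  rw [key]
  have hpos : 0 < ((ellE r - (1-r^2)*ellK r)^2 + r^2*(1-r^2)*ellK r^2)/(r*(1-r^2)) := by
    apply div_pos _ (by positivity)
    have h2 : 0 < r^2*(1-r^2)*ellK r^2 := by positivity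
    nlinarith [sq_nonneg (ellE r - (1-r^2)*ellK r)]
  linarith

lemma EK_strictAnti : StrictAntiOn (fun r => ellE r / ellK r) (Ioo 0 1) := by
  apply strictAntiOn_of_deriv_neg (convex_Ioo 0 1)
  · intro r hr
    exact (hasDerivAt_EK hr.1 hr.2).continuousAt.continuousWithinAt
  · intro r hr
    rw [interior_Ioo] at hr
    rw [(hasDerivAt_EK hr.1 hr.2).deriv]
    exact EK_deriv_neg hr.1 hr.2

lemma hasDerivAt_f {r : ℝ} (hr0 : 0 < r) (hr1 : r < 1) :
    HasDerivAt (fun r : ℝ => r * Real.sqrt (1 - r ^ 2) * ellK r * ellK (Real.sqrt (1 - r ^ 2)))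
      ((ellE r * ellK (Real.sqrt (1 - r ^ 2)) - ellE (Real.sqrt (1 - r ^ 2)) * ellK r)
        / Real.sqrt (1 - r ^ 2)) r := by
  have hsq : r^2 < 1 := by nlinarith
  have h1 : (0:ℝ) < 1 - r^2 := by nlinarith
  set v := Real.sqrt (1 - r ^ 2) with hvdef
  have hv : 0 < v := Real.sqrt_pos.mpr (by nlinarith)
  have hv2 : v^2 = 1 - r^2 := Real.sq_sqrt (by nlinarith)
  have hvsq : v^2 < 1 := by nlinarith
  have hU : HasDerivAt (fun x : ℝ => 1 - x^2) (-(2*r)) r := by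
    have h := (hasDerivAt_pow 2 r).const_sub 1
    refine h.congr_deriv ?_
    push_cast; ring
  have hsqrt : HasDerivAt (fun x : ℝ => Real.sqrt (1 - x^2)) (1/(2*v) * (-(2*r))) r :=
    (Real.hasDerivAt_sqrt h1.ne').comp r hU
  have hKr := hasDerivAt_ellK hr0.ne' hsq
  have hKv := (hasDerivAt_ellK hv.ne' hvsq).comp r hsqrt
  have hA : HasDerivAt (fun x : ℝ => x * Real.sqrt (1 - x^2))
      (1 * Real.sqrt (1 - r^2) + r * (1/(2*v) * (-(2*r)))) r := (hasDerivAt_id r).mul hsqrt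
  have hB := hA.fun_mul hKr
  have hC := hB.fun_mul hKv
  refine hC.congr_deriv ?_
  simp only [Function.comp_apply, ← hvdef]
  rw [show (1 - v^2) = r^2 by linarith]
  rw [← hv2] at *
  field_simp
  ring

lemma sqrt_two_facts : (0:ℝ) < 1/Real.sqrt 2 ∧ 1/Real.sqrt 2 < 1 := by
  have h2 : (1:ℝ) < Real.sqrt 2 := by
    rw [show (1:ℝ) = Real.sqrt 1 by simp]
    exact Real.sqrt_lt_sqrt (by norm_num) (by norm_num)
  constructor
  · positivity
  · rw [div_lt_one (by linarith)]; exact h2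

lemma fderiv_sign_pos {r : ℝ} (hr0 : 0 < r) (hrc : r < 1/Real.sqrt 2) :
    0 < (ellE r * ellK (Real.sqrt (1 - r ^ 2)) - ellE (Real.sqrt (1 - r ^ 2)) * ellK r)
        / Real.sqrt (1 - r ^ 2) := by
  have hr1 : r < 1 := hrc.trans sqrt_two_facts.2
  have hs2 : Real.sqrt 2 ^ 2 = 2 := Real.sq_sqrt (by norm_num)
  have hs2p : 0 < Real.sqrt 2 := Real.sqrt_pos.mpr (by norm_num)
  have hhalf : r^2 < 1/2 := by
    have : r * Real.sqrt 2 < 1 := by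
      rw [div_eq_inv_mul, mul_one] at hrc
      calc r * Real.sqrt 2 < (Real.sqrt 2)⁻¹ * Real.sqrt 2 := by
            apply mul_lt_mul_of_pos_right hrc hs2p
        _ = 1 := inv_mul_cancel₀ hs2p.ne'
    nlinarith
  have hsq : r^2 < 1 := by nlinarith
  have h1 : (0:ℝ) < 1 - r^2 := by nlinarith
  set v := Real.sqrt (1 - r ^ 2) with hvdef
  have hv : 0 < v := Real.sqrt_pos.mpr h1
  have hv2 : v^2 = 1 - r^2 := Real.sq_sqrt h1.le
  have hv1 : v < 1 := by nlinarith
  have hrv : r < v := by nlinarith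
  have hmem1 : r ∈ Ioo (0:ℝ) 1 := ⟨hr0, hr1⟩
  have hmem2 : v ∈ Ioo (0:ℝ) 1 := ⟨hv, hv1⟩
  have h := EK_strictAnti hmem1 hmem2 hrv
  have hKr := ellK_pos hsq
  have hKv := ellK_pos (by nlinarith : v^2 < 1)
  simp only at h
  rw [div_lt_div_iff₀ hKv hKr] at h
  apply div_pos _ hv
  linarith

lemma fderiv_sign_neg {r : ℝ} (hrc : 1/Real.sqrt 2 < r) (hr1 : r < 1) :
    (ellE r * ellK (Real.sqrt (1 - r ^ 2)) - ellE (Real.sqrt (1 - r ^ 2)) * ellK r)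
        / Real.sqrt (1 - r ^ 2) < 0 := by
  have hr0 : 0 < r := sqrt_two_facts.1.trans hrc
  have hs2 : Real.sqrt 2 ^ 2 = 2 := Real.sq_sqrt (by norm_num)
  have hs2p : 0 < Real.sqrt 2 := Real.sqrt_pos.mpr (by norm_num)
  have hhalf : 1/2 < r^2 := by
    have : 1 < r * Real.sqrt 2 := by
      rw [div_lt_iff₀ hs2p] at hrc
      linarith
    nlinarith
  have hsq : r^2 < 1 := by nlinarith
  have h1 : (0:ℝ) < 1 - r^2 := by nlinarith
  set v := Real.sqrt (1 - r ^ 2) with hvdef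
  have hv : 0 < v := Real.sqrt_pos.mpr h1
  have hv2 : v^2 = 1 - r^2 := Real.sq_sqrt h1.le
  have hv1 : v < 1 := by nlinarith
  have hrv : v < r := by nlinarith
  have h := EK_strictAnti ⟨hv, hv1⟩ ⟨hr0, hr1⟩ hrv
  have hKr := ellK_pos hsq
  have hKv := ellK_pos (by nlinarith : v^2 < 1)
  simp only at h
  rw [div_lt_div_iff₀ hKr hKv] at h
  apply div_neg_of_neg_of_pos _ hv
  linarith

theorem stmt_0 :
    StrictMonoOn (fun r : ℝ => r * Real.sqrt (1 - r ^ 2) * ellK r * ellK (Real.sqrt (1 - r ^ 2)))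
      (Set.Ioc 0 (1 / Real.sqrt 2)) ∧
    StrictAntiOn (fun r : ℝ => r * Real.sqrt (1 - r ^ 2) * ellK r * ellK (Real.sqrt (1 - r ^ 2)))
      (Set.Ico (1 / Real.sqrt 2) 1) := by
  have hc := sqrt_two_facts
  constructor
  · apply strictMonoOn_of_deriv_pos (convex_Ioc 0 (1/Real.sqrt 2))
    · intro x hx
      exact (hasDerivAt_f hx.1 (lt_of_le_of_lt hx.2 hc.2)).continuousAt.continuousWithinAt
    · intro x hx
      rw [interior_Ioc] at hx
      rw [(hasDerivAt_f hx.1 (hx.2.trans hc.2)).deriv]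
      exact fderiv_sign_pos hx.1 hx.2
  · apply strictAntiOn_of_deriv_neg (convex_Ico (1/Real.sqrt 2) 1)
    · intro x hx
      exact (hasDerivAt_f (hc.1.trans_le hx.1) hx.2).continuousAt.continuousWithinAt
    · intro x hx
      rw [interior_Ico] at hx
      rw [(hasDerivAt_f (hc.1.trans hx.1) hx.2).deriv]
      exact fderiv_sign_neg hx.1 hx.2
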